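/- Let K ⊆ ℝ^d be a compact set, let f : K → ℝ admit a derivative df on K (df not assumed continuous), and let x, y ∈ K. If γ : [a,b] → K is a rectifiable path with γ(a) = x and γ(b) = y, then |f(y) − f(x)| ≤ L(γ) · sup{|df(z)| : z ∈ γ([a,b])}. -/

import Mathlib

open Set Filter Topology MeasureTheory
open scoped NNReal ENNReal

noncomputable section

/-- `df` is a (not necessarily unique) derivative of `f` on the set `K`:
at every `x ∈ K`, `(f y - f x - ⟪df x, y - x⟫)/‖y - x‖ → 0` as `y → x` within `K`. -/
def IsDerivOn {d : ℕ} (K : Set (EuclideanSpace ℝ (Fin d)))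
    (f : EuclideanSpace ℝ (Fin d) → ℝ)
    (df : EuclideanSpace ℝ (Fin d) → EuclideanSpace ℝ (Fin d)) : Prop :=
  ∀ x ∈ K, Filter.Tendsto
    (fun y => (f y - f x - (inner ℝ (df x) (y - x) : ℝ)) / ‖y - x‖)
    (𝓝[K \ {x}] x) (𝓝 0)

/-!
Fix `L > M`. By the derivative condition and the continuity of `γ`, each parameter `c` has a
neighbourhood on which `|f (γ t) - f (γ c)| ≤ L ‖γ t - γ c‖ ≤ L |V t - V c|`, where
`V t` is the length of `γ` on `[a, t]`. A supremum argument on `[a, b]` turns this local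
control by the monotone function `V` into the global bound `|f y - f x| ≤ L (V b - V a)`;
no continuity of `V` is needed, since the bound only has to pass to the supremum from the left.
Letting `L ↓ M` gives the claim.
-/

theorem dist_le_mul_sub_of_forall_eventually {α E : Type*} [ConditionallyCompleteLinearOrder α]
    [TopologicalSpace α] [OrderTopology α] [DenselyOrdered α] [PseudoMetricSpace E]
    {φ : α → E} {V : α → ℝ} {a b : α} {L : ℝ} (hab : a ≤ b) (hV : MonotoneOn V (Icc a b))
    (hloc : ∀ c ∈ Icc a b, ∀ᶠ t in 𝓝[Icc a b] c, dist (φ t) (φ c) ≤ L * |V t - V c|) :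
    dist (φ b) (φ a) ≤ L * (V b - V a) := by
  set S := {t ∈ Icc a b | dist (φ t) (φ a) ≤ L * (V t - V a)}
  have haS : a ∈ S := ⟨left_mem_Icc.2 hab, by simp⟩
  have hSbdd : BddAbove S := ⟨b, fun t ht => ht.1.2⟩
  have hstep : ∀ t ∈ S, ∀ u ∈ Icc a b, t ≤ u → dist (φ u) (φ t) ≤ L * |V u - V t| → u ∈ S := by
    rintro t ⟨ht, htS⟩ u hu htu hut
    rw [abs_of_nonneg (sub_nonneg.2 (hV ht hu htu))] at hut
    exact ⟨hu, (dist_triangle _ (φ t) _).trans (by linarith)⟩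
  set c := sSup S
  have hc : c ∈ Icc a b := ⟨le_csSup hSbdd haS, csSup_le ⟨a, haS⟩ fun t ht => ht.1.2⟩
  have hcS : c ∈ S := by
    have := mem_closure_iff_nhdsWithin_neBot.1 (csSup_mem_closure ⟨a, haS⟩ hSbdd)
    obtain ⟨t, htc, htS⟩ :=
      (((hloc c hc).filter_mono (nhdsWithin_mono _ fun t (ht : t ∈ S) => ht.1)).and
        self_mem_nhdsWithin).exists
    refine hstep t htS c hc (le_csSup hSbdd htS) ?_
    rwa [dist_comm, abs_sub_comm]
  have hcb : c = b := by
    by_contra hne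
    have := left_nhdsWithin_Ioc_neBot (lt_of_le_of_ne hc.2 hne)
    obtain ⟨t, hct, htc⟩ := (((hloc c hc).filter_mono (nhdsWithin_mono _
      (Ioc_subset_Icc_self.trans (Icc_subset_Icc_left hc.1)))).and self_mem_nhdsWithin).exists
    exact htc.1.not_ge (le_csSup hSbdd (hstep c hcS t ⟨hc.1.trans htc.1.le, htc.2⟩ htc.1.le hct))
  exact hcb ▸ hcS.2

theorem LocallyBoundedVariationOn.dist_le_abs_variationOnFromTo {α E : Type*} [LinearOrder α]
    [PseudoMetricSpace E] {f : α → E} {s : Set α} (hf : LocallyBoundedVariationOn f s)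
    {x y : α} (hx : x ∈ s) (hy : y ∈ s) :
    dist (f x) (f y) ≤ |variationOnFromTo f s x y| := by
  wlog hxy : x ≤ y generalizing x y
  · rw [dist_comm, variationOnFromTo.eq_neg_swap, abs_neg]
    exact this hy hx (le_of_not_ge hxy)
  rw [variationOnFromTo.eq_of_le f s hxy, ENNReal.abs_toReal, dist_edist]
  exact ENNReal.toReal_mono (hf x y hx hy)
    (eVariationOn.edist_le f ⟨hx, le_rfl, hxy⟩ ⟨hy, hxy, le_rfl⟩)

theorem IsDerivOn.eventually_dist_le {d : ℕ} {K : Set (EuclideanSpace ℝ (Fin d))}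
    {f : EuclideanSpace ℝ (Fin d) → ℝ} {df : EuclideanSpace ℝ (Fin d) → EuclideanSpace ℝ (Fin d)}
    (hdf : IsDerivOn K f df) {z : EuclideanSpace ℝ (Fin d)} (hz : z ∈ K) {L : ℝ}
    (hL : ‖df z‖ < L) : ∀ᶠ w in 𝓝[K] z, dist (f w) (f z) ≤ L * dist w z := by
  have hsmall := Metric.tendsto_nhds.1 (hdf z hz) (L - ‖df z‖) (sub_pos.2 hL)
  rw [eventually_nhdsWithin_iff] at hsmall ⊢
  filter_upwards [hsmall] with w hw hwK
  rcases eq_or_ne w z with rfl | hwz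
  · simp
  have hpos : 0 < ‖w - z‖ := norm_pos_iff.2 (sub_ne_zero.2 hwz)
  have hrem := hw ⟨hwK, hwz⟩
  rw [dist_zero_right, norm_div, norm_norm, div_lt_iff₀ hpos, Real.norm_eq_abs] at hrem
  have hlin := abs_real_inner_le_norm (df z) (w - z)
  have htri := abs_sub_abs_le_abs_sub (f w - f z) (inner ℝ (df z) (w - z))
  rw [Real.dist_eq, dist_eq_norm]
  linarith

theorem mean_value_inequality {d : ℕ} (K : Set (EuclideanSpace ℝ (Fin d)))
    (f : EuclideanSpace ℝ (Fin d) → ℝ)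
    (df : EuclideanSpace ℝ (Fin d) → EuclideanSpace ℝ (Fin d))
    (hdf : IsDerivOn K f df)
    (x y : EuclideanSpace ℝ (Fin d))
    (a b : ℝ) (hab : a ≤ b) (γ : ℝ → EuclideanSpace ℝ (Fin d))
    (hγcont : ContinuousOn γ (Icc a b)) (hγK : MapsTo γ (Icc a b) K)
    (hγa : γ a = x) (hγb : γ b = y)
    (hrect : eVariationOn γ (Icc a b) ≠ ⊤)
    (M : ℝ) (hM : ∀ t ∈ Icc a b, ‖df (γ t)‖ ≤ M) :
    |f y - f x| ≤ (eVariationOn γ (Icc a b)).toReal * M := by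
  have hγ : LocallyBoundedVariationOn γ (Icc a b) :=
    BoundedVariationOn.locallyBoundedVariationOn hrect
  have ha : a ∈ Icc a b := left_mem_Icc.2 hab
  set V := variationOnFromTo γ (Icc a b) a
  have hVab : V b - V a = (eVariationOn γ (Icc a b)).toReal := by
    simp [V, variationOnFromTo.self, variationOnFromTo.eq_of_le _ _ hab]
  have hbound : ∀ L > M, |f y - f x| ≤ L * (V b - V a) := by
    intro L hL
    rw [← hγa, ← hγb, ← Real.dist_eq]
    refine dist_le_mul_sub_of_forall_eventually (φ := f ∘ γ) hab
      (variationOnFromTo.monotoneOn hγ ha) fun c hc => ?_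
    have hLc : ‖df (γ c)‖ < L := (hM c hc).trans_lt hL
    filter_upwards [(hγcont c hc).tendsto_nhdsWithin hγK |>.eventually
      (hdf.eventually_dist_le (hγK hc) hLc), self_mem_nhdsWithin] with t hft ht
    calc dist (f (γ t)) (f (γ c)) ≤ L * dist (γ t) (γ c) := hft
      _ ≤ L * |V t - V c| := by
        rw [dist_comm, variationOnFromTo.sub_right hγ ha ht hc]
        exact mul_le_mul_of_nonneg_left (hγ.dist_le_abs_variationOnFromTo hc ht)
          ((norm_nonneg _).trans hLc.le)
  rw [hVab] at hbound
  have hlim : Tendsto (fun L => L * (eVariationOn γ (Icc a b)).toReal) (𝓝[>] M)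
      (𝓝 (M * (eVariationOn γ (Icc a b)).toReal)) :=
    ((continuous_mul_const _).tendsto M).mono_left nhdsWithin_le_nhds
  rw [mul_comm]
  exact ge_of_tendsto hlim (eventually_nhdsWithin_of_forall hbound)

end
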